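/- Let γ : (t_0, ∞) → ℂ be an admissible curve. Then: (1) if a ∈ ℂ lies outside the closure of γ((t_0, ∞)) and |γ'(t)| is bounded as t ↘ t_0, then α(γ, a) is finite; (2) for every t_1 > t_0, α(γ|_{(t_1, ∞)}, γ(t_1)) is finite; (3) for every t_1 > t_0, α(γ'|_{(t_1, ∞)}, 0) is finite. -/

import Mathlib

open Filter Topology Set MeasureTheory
open scoped ENNReal Real

/-- The variation number `α(γ|_{(t₀,∞)}, a)` of a curve `γ` around `a`. -/
noncomputable def variation (γ : ℝ → ℂ) (t0 : ℝ) (a : ℂ) : ℝ≥0∞ :=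
  ENNReal.ofReal (1 / (2 * Real.pi)) *
    ∫⁻ t in Set.Ioi t0, ENNReal.ofReal |(deriv γ t / (γ t - a)).im|

/-- An admissible curve on `(t₀, ∞)`: injective, `C²`, nonvanishing derivative, and with
`|γ(t)| = t + O(1)`, `|γ'(t)| = 1 + O(1/t)`, `|γ''(t)| = O(1/t²)` as `t → ∞`. -/
def Admissible (t0 : ℝ) (γ : ℝ → ℂ) : Prop :=
  Set.InjOn γ (Set.Ioi t0) ∧ ContDiffOn ℝ 2 γ (Set.Ioi t0) ∧
  (∀ t ∈ Set.Ioi t0, deriv γ t ≠ 0) ∧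
  (∃ c : ℝ, ∀ᶠ t in Filter.atTop, |‖γ t‖ - t| ≤ c) ∧
  (∃ c : ℝ, ∀ᶠ t in Filter.atTop, |‖deriv γ t‖ - 1| ≤ c / t) ∧
  (∃ c : ℝ, ∀ᶠ t in Filter.atTop, ‖deriv (deriv γ) t‖ ≤ c / t ^ 2)

/-!
Write `Im (γ'/(γ - a)) = N / ‖γ - a‖²` with `N = Im (γ' · conj (γ - a))`. Since
`Im (γ' · conj γ') = 0`, the derivative of `N` is `Im (γ'' · conj (γ - a))`.

At infinity, `‖γ - a‖ ≍ t` and `γ'' = O(t⁻²)` give `N' = O(t⁻¹)`, hence `N = O(√t)` and the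
integrand is `O(t^(-3/2))`. For `γ'` around `0` the integrand is simply `‖γ''‖ / ‖γ'‖ = O(t⁻²)`.

Near the left end the integrand is bounded: trivially when `a` stays away from the curve, by
continuity for `γ'` around `0`, and for `a = γ t₁` because `N(t₁) = 0` and
`|N'(t)| ≤ ‖γ''‖ ‖γ t - γ t₁‖ = O(t - t₁)` give `N = O((t - t₁)²)`, while
`‖γ t - γ t₁‖ ≥ ‖γ' t₁‖ (t - t₁) / 2`.
-/

open Asymptotics
open scoped ComplexConjugate

theorem integrableOn_Ioi_of_isBigO_rpow {E : Type*} [NormedAddCommGroup E] {f : ℝ → E}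
    {a s : ℝ} (hf : ContinuousOn f (Ioi a)) (hbdd : (𝓝[>] a).IsBoundedUnder (· ≤ ·) (norm ∘ f))
    (htail : f =O[atTop] (· ^ s)) (hs : s < -1) : IntegrableOn f (Ioi a) := by
  have hmeas : AEStronglyMeasurable f (volume.restrict (Ioi a)) :=
    hf.aestronglyMeasurable measurableSet_Ioi
  exact integrableOn_Ioi_iff_integrableAtFilter_atTop_nhdsWithin.2
    ⟨htail.integrableAtFilter ⟨Ioi a, Ioi_mem_atTop a, hmeas⟩
      (integrableAtFilter_rpow_atTop_iff.2 hs),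
    (volume.finiteAt_nhdsWithin a _).integrableAtFilter ⟨Ioi a, self_mem_nhdsWithin, hmeas⟩ hbdd,
    hf.locallyIntegrableOn measurableSet_Ioi⟩

theorem ContDiffOn.hasDerivAt_deriv {E : Type*} [NormedAddCommGroup E] [NormedSpace ℝ E]
    {f : ℝ → E} {s : Set ℝ} {n : WithTop ℕ∞} (hf : ContDiffOn ℝ n f s) (hs : IsOpen s)
    (hn : n ≠ 0) {x : ℝ} (hx : x ∈ s) : HasDerivAt f (deriv f x) x :=
  ((hf.contDiffAt (hs.mem_nhds hx)).differentiableAt hn).hasDerivAt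

theorem HasDerivAt.eventually_le_norm_sub {E : Type*} [NormedAddCommGroup E] [NormedSpace ℝ E]
    {f : ℝ → E} {f' : E} {x : ℝ} (hf : HasDerivAt f f' x) :
    ∀ᶠ y in 𝓝 x, ‖f'‖ / 2 * |y - x| ≤ ‖f y - f x‖ := by
  rcases eq_or_ne f' 0 with rfl | hf'
  · simp
  filter_upwards [hf.isLittleO.def (half_pos (norm_pos_iff.2 hf'))] with y hy
  rw [Real.norm_eq_abs] at hy
  have hsmul : ‖(y - x) • f'‖ = |y - x| * ‖f'‖ := by rw [norm_smul, Real.norm_eq_abs]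
  linarith [norm_sub_norm_le ((y - x) • f') (f y - f x), norm_sub_rev (f y - f x) ((y - x) • f')]

theorem isBigO_sqrt_of_norm_deriv_le {E : Type*} [NormedAddCommGroup E] [NormedSpace ℝ E]
    {f f' : ℝ → E} {C : ℝ} (hf : ∀ᶠ t in atTop, HasDerivAt f (f' t) t)
    (hf' : ∀ᶠ t in atTop, ‖f' t‖ ≤ C / t) : f =O[atTop] Real.sqrt := by
  obtain ⟨T, hT⟩ := eventually_atTop.1 ((hf.and hf').and (eventually_ge_atTop 1))
  have hT1 : 1 ≤ T := (hT T le_rfl).2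
  have hC : 0 ≤ C := by
    simpa using (le_div_iff₀ (by linarith)).1 ((norm_nonneg _).trans (hT T le_rfl).1.2)
  -- the barrier `2 C √t` has derivative `C / √t ≥ C / t` on `[1, ∞)`
  have hbound : ∀ t ≥ T, ‖f t‖ ≤ ‖f T‖ + 2 * C * √t := by
    intro t ht
    refine image_norm_le_of_norm_deriv_right_le_deriv_boundary' (f' := f')
      (B := fun x => ‖f T‖ + 2 * C * √x) (B' := fun x => C / √x)
      (fun x hx => (hT x hx.1).1.1.continuousAt.continuousWithinAt)
      (fun x hx => (hT x hx.1).1.1.hasDerivWithinAt) ?_ ?_ ?_ ?_ ⟨ht, le_rfl⟩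
    · simp only [le_add_iff_nonneg_right]; positivity
    · exact (continuous_const.add (continuous_const.mul Real.continuous_sqrt)).continuousOn
    · intro x hx
      have hx0 : x ≠ 0 := by linarith [hx.1]
      refine (((Real.hasDerivAt_sqrt hx0).const_mul (2 * C)).const_add ‖f T‖).hasDerivWithinAt
        |>.congr_deriv ?_
      field_simp
    · intro x hx
      refine (hT x hx.1).1.2.trans
        (div_le_div_of_nonneg_left hC (Real.sqrt_pos.2 (by linarith [hx.1])) ?_)
      exact Real.sqrt_le_self_iff.2 (Or.inr (hT1.trans hx.1))
  refine IsBigO.of_bound (‖f T‖ + 2 * C) ?_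
  filter_upwards [eventually_ge_atTop T] with t ht
  have h1 : 1 ≤ √t := Real.one_le_sqrt.2 (hT1.trans ht)
  rw [Real.norm_of_nonneg (Real.sqrt_nonneg t)]
  nlinarith [hbound t ht, norm_nonneg (f T)]

theorem Complex.im_div_eq_im_mul_conj_div (z w : ℂ) :
    (z / w).im = (z * conj w).im / ‖w‖ ^ 2 := by
  rw [div_eq_mul_inv, Complex.inv_def, ← mul_assoc, Complex.normSq_eq_norm_sq,
    Complex.im_mul_ofReal, div_eq_mul_inv]

theorem Complex.abs_im_mul_conj_le (z w : ℂ) : |(z * conj w).im| ≤ ‖z‖ * ‖w‖ :=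
  (Complex.abs_im_le_norm _).trans (by rw [norm_mul, Complex.norm_conj])

theorem Complex.abs_im_div_le (z w : ℂ) : |(z / w).im| ≤ ‖z‖ / ‖w‖ :=
  (Complex.abs_im_le_norm _).trans (norm_div z w).le

theorem HasDerivAt.im_mul_conj {w v : ℝ → ℂ} {v' : ℂ} {t : ℝ} (hw : HasDerivAt w (v t) t)
    (hv : HasDerivAt v v' t) :
    HasDerivAt (fun s => (v s * conj (w s)).im) (v' * conj (w t)).im t := by
  have h := Complex.imCLM.hasFDerivAt.comp_hasDerivAt t (hv.mul hw.star)
  simpa [Function.comp_def, Complex.mul_conj] using h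

theorem abs_im_deriv_mul_conj_sub_le {γ : ℝ → ℂ} {t₁ t K M : ℝ} (ht : t₁ ≤ t)
    (hd : ∀ u ∈ Icc t₁ t, HasDerivAt γ (deriv γ u) u)
    (hd2 : ∀ u ∈ Icc t₁ t, HasDerivAt (deriv γ) (deriv (deriv γ) u) u)
    (hK : ∀ u ∈ Icc t₁ t, ‖deriv γ u‖ ≤ K) (hM : ∀ u ∈ Icc t₁ t, ‖deriv (deriv γ) u‖ ≤ M) :
    |(deriv γ t * conj (γ t - γ t₁)).im| ≤ M * K * (t - t₁) ^ 2 := by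
  have ht₁ : t₁ ∈ Icc t₁ t := left_mem_Icc.2 ht
  have hK0 : 0 ≤ K := (norm_nonneg _).trans (hK t₁ ht₁)
  have hM0 : 0 ≤ M := (norm_nonneg _).trans (hM t₁ ht₁)
  have hlip : ∀ u ∈ Icc t₁ t, ‖γ u - γ t₁‖ ≤ K * (u - t₁) :=
    norm_image_sub_le_of_norm_deriv_le_segment' (fun u hu => (hd u hu).hasDerivWithinAt)
      fun u hu => hK u (Ico_subset_Icc_self hu)
  have hN := norm_image_sub_le_of_norm_deriv_le_segment' (C := M * K * (t - t₁))
    (f := fun u => (deriv γ u * conj (γ u - γ t₁)).im)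
    (fun u hu => (((hd u hu).sub_const (γ t₁)).im_mul_conj (hd2 u hu)).hasDerivWithinAt)
    (fun u hu => ?_) t (right_mem_Icc.2 ht)
  · simpa [pow_two, mul_assoc] using hN
  · have hu' := Ico_subset_Icc_self hu
    rw [Real.norm_eq_abs]
    calc _ ≤ ‖deriv (deriv γ) u‖ * ‖γ u - γ t₁‖ := Complex.abs_im_mul_conj_le _ _
      _ ≤ M * (K * (u - t₁)) := mul_le_mul (hM u hu') (hlip u hu') (norm_nonneg _) hM0
      _ ≤ M * K * (t - t₁) := by
        rw [← mul_assoc]; exact mul_le_mul_of_nonneg_left (by linarith [hu.2]) (by positivity)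

theorem eventually_norm_sub_mem_Icc {γ : ℝ → ℂ} {c : ℝ} (a : ℂ)
    (hγ : ∀ᶠ t in atTop, |‖γ t‖ - t| ≤ c) :
    ∀ᶠ t in atTop, ‖γ t - a‖ ∈ Icc (t / 2) (2 * t) := by
  filter_upwards [hγ, eventually_ge_atTop (2 * (c + ‖a‖))] with t ht hta
  have := abs_le.1 ht
  exact ⟨by linarith [norm_sub_norm_le (γ t) a],
    by linarith [norm_sub_le (γ t) a, abs_nonneg (‖γ t‖ - t), norm_nonneg a]⟩

/-- The derivative of `arg (γ - a)`; thus
`variation γ t₀ a = (2π)⁻¹ ∫_{t₀}^∞ |angularVelocity γ a t| dt`. -/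
noncomputable def angularVelocity (γ : ℝ → ℂ) (a : ℂ) (t : ℝ) : ℝ :=
  (deriv γ t / (γ t - a)).im

theorem angularVelocity_eq (γ : ℝ → ℂ) (a : ℂ) (t : ℝ) :
    angularVelocity γ a t = (deriv γ t * conj (γ t - a)).im / ‖γ t - a‖ ^ 2 :=
  Complex.im_div_eq_im_mul_conj_div _ _

theorem continuousOn_angularVelocity {γ : ℝ → ℂ} {a : ℂ} {s : Set ℝ} (hγ : ContinuousOn γ s)
    (hγ' : ContinuousOn (deriv γ) s) (ha : ∀ t ∈ s, γ t ≠ a) :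
    ContinuousOn (angularVelocity γ a) s :=
  Complex.continuous_im.comp_continuousOn
    (hγ'.div (hγ.sub continuousOn_const) fun t ht => sub_ne_zero.2 (ha t ht))

theorem variation_lt_top_of_isBigO {γ : ℝ → ℂ} {t₀ s : ℝ} {a : ℂ}
    (hcont : ContinuousOn (angularVelocity γ a) (Ioi t₀))
    (hbdd : (𝓝[>] t₀).IsBoundedUnder (· ≤ ·) (norm ∘ angularVelocity γ a))
    (htail : angularVelocity γ a =O[atTop] (· ^ s)) (hs : s < -1) : variation γ t₀ a < ⊤ := by
  refine ENNReal.mul_lt_top ENNReal.ofReal_lt_top ?_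
  simpa only [Real.norm_eq_abs, angularVelocity] using
    (hasFiniteIntegral_iff_norm _).1 (integrableOn_Ioi_of_isBigO_rpow hcont hbdd htail hs).2

theorem isBoundedUnder_angularVelocity_of_notMem_closure {γ : ℝ → ℂ} {t₀ : ℝ} {a : ℂ}
    (ha : a ∉ closure (γ '' Ioi t₀)) (hbdd : ∃ c, ∀ᶠ t in 𝓝[>] t₀, ‖deriv γ t‖ ≤ c) :
    (𝓝[>] t₀).IsBoundedUnder (· ≤ ·) (norm ∘ angularVelocity γ a) := by
  obtain ⟨δ, hδ, hδa⟩ : ∃ δ > 0, ∀ t ∈ Ioi t₀, δ ≤ ‖γ t - a‖ := by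
    simpa [Metric.mem_closure_iff, dist_eq_norm, norm_sub_rev] using ha
  obtain ⟨c, hc⟩ := hbdd
  refine isBoundedUnder_of_eventually_le (a := c / δ) ?_
  filter_upwards [hc, self_mem_nhdsWithin] with t hct ht
  exact (Complex.abs_im_div_le _ _).trans
    (div_le_div₀ ((norm_nonneg _).trans hct) hct hδ (hδa t ht))

theorem isBoundedUnder_angularVelocity_self {γ : ℝ → ℂ} {s : Set ℝ} {t₁ : ℝ} (hs : IsOpen s)
    (ht₁ : t₁ ∈ s) (hγ : ContDiffOn ℝ 2 γ s) (hγ' : deriv γ t₁ ≠ 0) :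
    (𝓝[>] t₁).IsBoundedUnder (· ≤ ·) (norm ∘ angularVelocity γ (γ t₁)) := by
  set m := ‖deriv γ t₁‖
  set K := m + 1
  set M := ‖deriv (deriv γ) t₁‖ + 1
  have hm : 0 < m := norm_pos_iff.2 hγ'
  have hγ₁ : ContDiffOn ℝ 1 (deriv γ) s := hγ.deriv_of_isOpen hs (by norm_num)
  have hnear : ∀ᶠ u in 𝓝 t₁, u ∈ s ∧ ‖deriv γ u‖ ≤ K ∧ ‖deriv (deriv γ) u‖ ≤ M ∧
      m / 2 * |u - t₁| ≤ ‖γ u - γ t₁‖ :=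
    (hs.eventually_mem ht₁).and <|
      (((hγ.continuousOn_deriv_of_isOpen hs (by norm_num)).continuousAt
        (hs.mem_nhds ht₁)).norm.eventually (eventually_le_nhds (lt_add_one m))).and <|
      (((hγ₁.continuousOn_deriv_of_isOpen hs le_rfl).continuousAt
        (hs.mem_nhds ht₁)).norm.eventually (eventually_le_nhds (lt_add_one _))).and <|
      (hγ.hasDerivAt_deriv hs two_ne_zero ht₁).eventually_le_norm_sub
  obtain ⟨ε, hε, hball⟩ := Metric.eventually_nhds_iff.1 hnear
  refine isBoundedUnder_of_eventually_le (a := 4 * M * K / m ^ 2) ?_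
  filter_upwards [Ioo_mem_nhdsGT (lt_add_of_pos_right t₁ hε)] with t ht
  have hIcc : ∀ u ∈ Icc t₁ t, dist u t₁ < ε := fun u hu => by
    rw [Real.dist_eq, abs_lt]; constructor <;> linarith [hu.1, hu.2, ht.2]
  have hN := abs_im_deriv_mul_conj_sub_le ht.1.le
    (fun u hu => hγ.hasDerivAt_deriv hs two_ne_zero (hball (hIcc u hu)).1)
    (fun u hu => hγ₁.hasDerivAt_deriv hs one_ne_zero (hball (hIcc u hu)).1)
    (fun u hu => (hball (hIcc u hu)).2.1) (fun u hu => (hball (hIcc u hu)).2.2.1)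
  have hlow : m / 2 * (t - t₁) ≤ ‖γ t - γ t₁‖ := by
    simpa [abs_of_pos (sub_pos.2 ht.1)] using (hball (hIcc t (right_mem_Icc.2 ht.1.le))).2.2.2
  have htt : 0 < t - t₁ := by linarith [ht.1]
  rw [Function.comp_apply, Real.norm_eq_abs, angularVelocity_eq, abs_div,
    abs_of_nonneg (sq_nonneg ‖γ t - γ t₁‖)]
  calc _ ≤ M * K * (t - t₁) ^ 2 / (m / 2 * (t - t₁)) ^ 2 :=
        div_le_div₀ (by positivity) hN (by positivity) (pow_le_pow_left₀ (by positivity) hlow 2)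
    _ = 4 * M * K / m ^ 2 := by field_simp; ring

theorem isBigO_angularVelocity_atTop {γ : ℝ → ℂ} (a : ℂ)
    (hd : ∀ᶠ t in atTop, HasDerivAt γ (deriv γ t) t)
    (hd2 : ∀ᶠ t in atTop, HasDerivAt (deriv γ) (deriv (deriv γ) t) t)
    (hγ : ∃ c, ∀ᶠ t in atTop, |‖γ t‖ - t| ≤ c)
    (hγ'' : ∃ c, ∀ᶠ t in atTop, ‖deriv (deriv γ) t‖ ≤ c / t ^ 2) :
    angularVelocity γ a =O[atTop] (· ^ (-3 / 2 : ℝ)) := by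
  obtain ⟨c₁, hc₁⟩ := hγ
  obtain ⟨c₂, hc₂⟩ := hγ''
  have hnorm := eventually_norm_sub_mem_Icc a hc₁
  have hnum : (fun t => (deriv γ t * conj (γ t - a)).im) =O[atTop] Real.sqrt := by
    refine isBigO_sqrt_of_norm_deriv_le (C := 2 * c₂)
      (f' := fun t => (deriv (deriv γ) t * conj (γ t - a)).im) ?_ ?_
    · filter_upwards [hd, hd2] with t ht ht2
      exact (ht.sub_const a).im_mul_conj ht2
    · filter_upwards [hc₂, hnorm, eventually_gt_atTop 0] with t ht hta ht0
      rw [Real.norm_eq_abs]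
      calc _ ≤ ‖deriv (deriv γ) t‖ * ‖γ t - a‖ := Complex.abs_im_mul_conj_le _ _
        _ ≤ c₂ / t ^ 2 * (2 * t) := mul_le_mul ht hta.2 (norm_nonneg _) ((norm_nonneg _).trans ht)
        _ = 2 * c₂ / t := by field_simp
  have hden : (fun t => (‖γ t - a‖ ^ 2)⁻¹) =O[atTop] fun t : ℝ => (t ^ 2)⁻¹ := by
    refine IsBigO.of_bound 4 ?_
    filter_upwards [hnorm, eventually_gt_atTop 0] with t hta ht0
    have : (t / 2) ^ 2 ≤ ‖γ t - a‖ ^ 2 := pow_le_pow_left₀ (by positivity) hta.1 2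
    rw [norm_inv, norm_inv, Real.norm_of_nonneg (by positivity),
      Real.norm_of_nonneg (by positivity)]
    calc (‖γ t - a‖ ^ 2)⁻¹ ≤ ((t / 2) ^ 2)⁻¹ := inv_anti₀ (by positivity) this
      _ = 4 * (t ^ 2)⁻¹ := by ring
  have hrpow : (fun t : ℝ => √t * (t ^ 2)⁻¹) =ᶠ[atTop] (· ^ (-3 / 2 : ℝ)) := by
    filter_upwards [eventually_gt_atTop 0] with t ht
    rw [Real.sqrt_eq_rpow, ← Real.rpow_natCast, ← Real.rpow_neg ht.le, ← Real.rpow_add ht]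
    norm_num
  have heq : angularVelocity γ a = fun t =>
      (deriv γ t * conj (γ t - a)).im * (‖γ t - a‖ ^ 2)⁻¹ := by
    ext t
    rw [angularVelocity_eq, div_eq_mul_inv]
  rw [heq]
  exact (hnum.mul hden).trans_eventuallyEq hrpow

theorem isBigO_angularVelocity_deriv_atTop {γ : ℝ → ℂ}
    (hγ' : ∃ c, ∀ᶠ t in atTop, |‖deriv γ t‖ - 1| ≤ c / t)
    (hγ'' : ∃ c, ∀ᶠ t in atTop, ‖deriv (deriv γ) t‖ ≤ c / t ^ 2) :
    angularVelocity (deriv γ) 0 =O[atTop] (· ^ (-2 : ℝ)) := by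
  obtain ⟨c₁, hc₁⟩ := hγ'
  obtain ⟨c₂, hc₂⟩ := hγ''
  have hsmall : ∀ᶠ t in atTop, c₁ / t ≤ 1 / 2 :=
    (tendsto_const_nhds.div_atTop tendsto_id).eventually (eventually_le_nhds (by norm_num))
  refine IsBigO.of_bound (2 * c₂) ?_
  filter_upwards [hc₁, hc₂, hsmall, eventually_gt_atTop 0] with t ht₁ ht₂ hts ht0
  have hlow : 1 / 2 ≤ ‖deriv γ t‖ := by linarith [(abs_le.1 ht₁).1]
  rw [Real.norm_eq_abs, Real.norm_of_nonneg (by positivity), Real.rpow_neg ht0.le,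
    Real.rpow_two, angularVelocity, sub_zero]
  calc _ ≤ ‖deriv (deriv γ) t‖ / ‖deriv γ t‖ := Complex.abs_im_div_le _ _
    _ ≤ c₂ / t ^ 2 / (1 / 2) := div_le_div₀ ((norm_nonneg _).trans ht₂) ht₂ (by norm_num) hlow
    _ = 2 * c₂ * (t ^ 2)⁻¹ := by ring

/-- **Admissible Curves Have Variation Numbers.**
Let `γ` be an admissible curve on `(t₀, ∞)`. (1) If `a` lies outside the closure of the
image of `γ` and `|γ'|` is bounded as `t ↘ t₀`, then `α(γ, a)` is finite. (2) For every
`t₁ > t₀`, `α(γ|_{(t₁,∞)}, γ(t₁))` is finite. (3) For every `t₁ > t₀`,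
`α(γ'|_{(t₁,∞)}, 0)` is finite. -/
theorem admissible_variation_finite (t0 : ℝ) (γ : ℝ → ℂ) (h : Admissible t0 γ) :
    (∀ a : ℂ, a ∉ closure (γ '' Set.Ioi t0) →
      (∃ c : ℝ, ∀ᶠ t in nhdsWithin t0 (Set.Ioi t0), ‖deriv γ t‖ ≤ c) →
      variation γ t0 a < ⊤) ∧
    (∀ t1 : ℝ, t0 < t1 → variation γ t1 (γ t1) < ⊤) ∧
    (∀ t1 : ℝ, t0 < t1 → variation (deriv γ) t1 0 < ⊤) := by
  obtain ⟨hinj, hγ, hγ', hc₁, hc₂, hc₃⟩ := h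
  have hγ₁ : ContDiffOn ℝ 1 (deriv γ) (Ioi t0) := hγ.deriv_of_isOpen isOpen_Ioi (by norm_num)
  have hcont' := hγ.continuousOn_deriv_of_isOpen isOpen_Ioi (by norm_num)
  have hcont'' := hγ₁.continuousOn_deriv_of_isOpen isOpen_Ioi le_rfl
  have htail (a : ℂ) : angularVelocity γ a =O[atTop] (· ^ (-3 / 2 : ℝ)) :=
    isBigO_angularVelocity_atTop a
      ((eventually_gt_atTop t0).mono fun _ => hγ.hasDerivAt_deriv isOpen_Ioi two_ne_zero)
      ((eventually_gt_atTop t0).mono fun _ => hγ₁.hasDerivAt_deriv isOpen_Ioi one_ne_zero) hc₁ hc₃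
  refine ⟨fun a ha hbdd => ?_, fun t₁ ht₁ => ?_, fun t₁ ht₁ => ?_⟩
  · exact variation_lt_top_of_isBigO (continuousOn_angularVelocity hγ.continuousOn hcont'
        fun t ht hta => ha (hta ▸ subset_closure (mem_image_of_mem γ ht)))
      (isBoundedUnder_angularVelocity_of_notMem_closure ha hbdd) (htail a) (by norm_num)
  · have hsub : Ioi t₁ ⊆ Ioi t0 := Ioi_subset_Ioi ht₁.le
    exact variation_lt_top_of_isBigO (continuousOn_angularVelocity (hγ.continuousOn.mono hsub)
        (hcont'.mono hsub) fun t ht => hinj.ne (hsub ht) ht₁ (ne_of_gt ht))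
      (isBoundedUnder_angularVelocity_self isOpen_Ioi ht₁ hγ (hγ' t₁ ht₁)) (htail _) (by norm_num)
  · have hcont := continuousOn_angularVelocity hcont' hcont'' hγ'
    exact variation_lt_top_of_isBigO (hcont.mono (Ioi_subset_Ioi ht₁.le))
      (((hcont.continuousAt (isOpen_Ioi.mem_nhds ht₁)).norm.tendsto.isBoundedUnder_le).mono
        nhdsWithin_le_nhds)
      (isBigO_angularVelocity_deriv_atTop hc₂ hc₃) (by norm_num)
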